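/- arXiv:1101.4907 — 8 statements merged into one kernel-verified Lean document; each statement's English description precedes it below -/
import Mathlib

section
/- Let (R, m) be a commutative local ring, I an ideal of R with I ≠ R, f ∈ R, and S = S(f) the pseudocanonical cover of R via f. Then S is a local ring whose maximal ideal is m_S = {a + b·t : a ∈ m, b ∈ I}; that is, m_S is a proper ideal of S and every element of S not lying in m_S is a unit of S. -/
/-!
Write elements of `S(f)` as `a + b·t`. The conjugate `a − b·t` also lies in `S(f)` and
`(a + b·t)(a − b·t) = a² − b²f`; since `b ∈ I ⊆ m`, this norm is a unit as soon as `a ∉ m`, so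
every element outside `m_S` is invertible. The ideal `m_S` is proper because `1, t` is an
`R`-basis of `R[T]/(T² − f)`, so `1 = a + b·t` forces `a = 1 ∉ m`.
-/

open Polynomial

/-- The set `{a + b·t : a ∈ R, b ∈ I}` inside `A = R[T]/(T² − f)`. -/
def pccSet {R : Type*} [CommRing R] (I : Ideal R) (f : R) :
    Set (AdjoinRoot (X ^ 2 - C f)) :=
  {x | ∃ a b : R, b ∈ I ∧
    x = algebraMap R (AdjoinRoot (X ^ 2 - C f)) a +
        algebraMap R (AdjoinRoot (X ^ 2 - C f)) b * AdjoinRoot.root (X ^ 2 - C f)}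

/-- The pseudocanonical cover `S(f) = R + It` of `R` via `f`, as a subring of
`A = R[T]/(T² − f)`. -/
noncomputable def pcc {R : Type*} [CommRing R] (I : Ideal R) (f : R) :
    Subring (AdjoinRoot (X ^ 2 - C f)) where
  carrier := pccSet I f
  one_mem' := ⟨1, 0, I.zero_mem, by simp⟩
  zero_mem' := ⟨0, 0, I.zero_mem, by simp⟩
  add_mem' := by
    rintro x y ⟨a, b, hb, rfl⟩ ⟨c, d, hd, rfl⟩
    exact ⟨a + c, b + d, I.add_mem hb hd, by simp only [map_add]; ring⟩
  neg_mem' := by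
    rintro x ⟨a, b, hb, rfl⟩
    exact ⟨-a, -b, I.neg_mem hb, by simp only [map_neg]; ring⟩
  mul_mem' := by
    rintro x y ⟨a, b, hb, rfl⟩ ⟨c, d, hd, rfl⟩
    refine ⟨a * c + b * d * f, a * d + b * c, I.add_mem (I.mul_mem_left a hd) (I.mul_mem_right c hb), ?_⟩
    have hroot : AdjoinRoot.root (X ^ 2 - C f) ^ 2 =
        algebraMap R (AdjoinRoot (X ^ 2 - C f)) f := by
      have h := AdjoinRoot.eval₂_root (X ^ 2 - C f)
      simp only [eval₂_sub, eval₂_pow, eval₂_X, eval₂_C, sub_eq_zero] at h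
      exact h
    simp only [map_add, map_mul]
    linear_combination (algebraMap R (AdjoinRoot (X ^ 2 - C f)) b *
      algebraMap R (AdjoinRoot (X ^ 2 - C f)) d) * hroot

/-- The canonical ring homomorphism `R → S(f)`. -/
noncomputable def toPcc {R : Type*} [CommRing R] (I : Ideal R) (f : R) :
    R →+* pcc I f :=
  (algebraMap R (AdjoinRoot (X ^ 2 - C f))).codRestrict (pcc I f)
    (fun a => ⟨a, 0, I.zero_mem, by simp⟩)

/-- The element `u·t` of `S(f)`, for `u ∈ I`. -/
noncomputable def utElem {R : Type*} [CommRing R] (I : Ideal R) (f : R) (u : R) (hu : u ∈ I) :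
    pcc I f :=
  ⟨algebraMap R (AdjoinRoot (X ^ 2 - C f)) u * AdjoinRoot.root (X ^ 2 - C f),
    0, u, hu, by simp⟩

/-- The set `m_S = {a + b·t : a ∈ m, b ∈ I}` inside `A = R[T]/(T² − f)`. -/
def mSSet {R : Type*} [CommRing R] (m I : Ideal R) (f : R) :
    Set (AdjoinRoot (X ^ 2 - C f)) :=
  {x | ∃ a b : R, a ∈ m ∧ b ∈ I ∧
    x = algebraMap R (AdjoinRoot (X ^ 2 - C f)) a +
        algebraMap R (AdjoinRoot (X ^ 2 - C f)) b * AdjoinRoot.root (X ^ 2 - C f)}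

section AdjoinSqrt

variable {R : Type*} [CommRing R] (f : R)

open AdjoinRoot

lemma root_sq_eq : root (X ^ 2 - C f) ^ 2 = algebraMap R (AdjoinRoot (X ^ 2 - C f)) f := by
  have h := eval₂_root (X ^ 2 - C f)
  rwa [eval₂_sub, eval₂_pow, eval₂_X, eval₂_C, sub_eq_zero] at h

lemma algebraMap_add_mul_root_eq_mk (a b : R) :
    algebraMap R (AdjoinRoot (X ^ 2 - C f)) a +
        algebraMap R (AdjoinRoot (X ^ 2 - C f)) b * root (X ^ 2 - C f) =
      mk (X ^ 2 - C f) (C b * X + C a) := by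
  rw [map_add, map_mul, mk_X, mk_C, mk_C, add_comm]
  rfl

lemma algebraMap_add_mul_root_inj {a b c d : R}
    (h : algebraMap R (AdjoinRoot (X ^ 2 - C f)) a +
        algebraMap R (AdjoinRoot (X ^ 2 - C f)) b * root (X ^ 2 - C f) =
      algebraMap R (AdjoinRoot (X ^ 2 - C f)) c +
        algebraMap R (AdjoinRoot (X ^ 2 - C f)) d * root (X ^ 2 - C f)) :
    a = c ∧ b = d := by
  nontriviality R
  have hmonic : (X ^ 2 - C f).Monic := monic_X_pow_sub_C f two_ne_zero
  have hreduced (a b : R) : (C b * X + C a) %ₘ (X ^ 2 - C f) = C b * X + C a := by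
    rw [modByMonic_eq_self_iff hmonic, degree_X_pow_sub_C two_pos]
    exact degree_linear_lt
  rw [algebraMap_add_mul_root_eq_mk, algebraMap_add_mul_root_eq_mk] at h
  have hpoly := congrArg (modByMonicHom hmonic) h
  rw [modByMonicHom_mk, modByMonicHom_mk, hreduced, hreduced] at hpoly
  exact ⟨by simpa using congrArg (coeff · 0) hpoly, by simpa using congrArg (coeff · 1) hpoly⟩

lemma algebraMap_add_mul_root_mul (a b c d : R) :
    (algebraMap R (AdjoinRoot (X ^ 2 - C f)) a +
        algebraMap R (AdjoinRoot (X ^ 2 - C f)) b * root (X ^ 2 - C f)) *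
      (algebraMap R (AdjoinRoot (X ^ 2 - C f)) c +
        algebraMap R (AdjoinRoot (X ^ 2 - C f)) d * root (X ^ 2 - C f)) =
      algebraMap R (AdjoinRoot (X ^ 2 - C f)) (a * c + b * d * f) +
        algebraMap R (AdjoinRoot (X ^ 2 - C f)) (a * d + b * c) * root (X ^ 2 - C f) := by
  simp only [map_add, map_mul]
  linear_combination (algebraMap R (AdjoinRoot (X ^ 2 - C f)) b *
    algebraMap R (AdjoinRoot (X ^ 2 - C f)) d) * root_sq_eq f

end AdjoinSqrt

section PseudocanonicalCover

variable {R : Type*} [CommRing R]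

open AdjoinRoot

lemma pcc_isUnit_of_isUnit_norm {I : Ideal R} {f : R} (s : pcc I f) {a b : R} (hb : b ∈ I)
    (hs : (s : AdjoinRoot (X ^ 2 - C f)) = algebraMap R _ a + algebraMap R _ b * root _)
    (hnorm : IsUnit (a ^ 2 - b ^ 2 * f)) : IsUnit s := by
  obtain ⟨v, hv⟩ := hnorm.exists_right_inv
  let conj : pcc I f := ⟨_, a * v, -(b * v), I.neg_mem (I.mul_mem_right v hb), rfl⟩
  refine IsUnit.of_mul_eq_one conj (Subtype.ext ?_)
  change (s : AdjoinRoot (X ^ 2 - C f)) * conj = 1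
  rw [hs, algebraMap_add_mul_root_mul]
  have hconst : a * (a * v) + b * -(b * v) * f = 1 := by linear_combination hv
  have hlinear : a * -(b * v) + b * (a * v) = 0 := by ring
  rw [hconst, hlinear, map_one, map_zero, zero_mul, add_zero]

noncomputable def mSIdeal (m I : Ideal R) (f : R) (hIm : I ≤ m) : Ideal (pcc I f) where
  carrier := {s | (s : AdjoinRoot (X ^ 2 - C f)) ∈ mSSet m I f}
  zero_mem' := ⟨0, 0, m.zero_mem, I.zero_mem, by simp⟩
  add_mem' := by
    rintro x y ⟨a, b, ha, hb, hx⟩ ⟨c, d, hc, hd, hy⟩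
    refine ⟨a + c, b + d, m.add_mem ha hc, I.add_mem hb hd, ?_⟩
    rw [Subring.coe_add, hx, hy, map_add, map_add]
    ring
  smul_mem' := by
    rintro ⟨_, a, b, hb, rfl⟩ x ⟨c, d, hc, hd, hx⟩
    refine ⟨a * c + b * d * f, a * d + b * c,
      m.add_mem (m.mul_mem_left a hc) (m.mul_mem_right f (m.mul_mem_right d (hIm hb))),
      I.add_mem (I.mul_mem_left a hd) (I.mul_mem_right c hb), ?_⟩
    rw [smul_eq_mul, Subring.coe_mul, hx, algebraMap_add_mul_root_mul]

lemma val_image_mSIdeal {m I : Ideal R} {f : R} (hIm : I ≤ m) :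
    Subtype.val '' (mSIdeal m I f hIm : Set (pcc I f)) = mSSet m I f := by
  ext x
  constructor
  · rintro ⟨s, hs, rfl⟩
    exact hs
  · intro hx
    obtain ⟨a, b, -, hb, hab⟩ := id hx
    exact ⟨⟨x, a, b, hb, hab⟩, hx, rfl⟩

lemma mSIdeal_ne_top {m I : Ideal R} {f : R} (hIm : I ≤ m) (hm : m ≠ ⊤) :
    mSIdeal m I f hIm ≠ ⊤ := by
  rw [Ideal.ne_top_iff_one]
  rintro ⟨a, b, ha, -, hone⟩
  obtain ⟨rfl, -⟩ := algebraMap_add_mul_root_inj f (a := 1) (b := 0) (by simpa using hone)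
  exact (Ideal.ne_top_iff_one m).mp hm ha

open IsLocalRing in
lemma isUnit_of_notMem_mSIdeal [IsLocalRing R] {I : Ideal R} {f : R}
    (hIm : I ≤ maximalIdeal R) {s : pcc I f} (hs : s ∉ mSIdeal (maximalIdeal R) I f hIm) :
    IsUnit s := by
  obtain ⟨a, b, hb, hval⟩ := s.2
  have ha : a ∉ maximalIdeal R := fun ha => hs ⟨a, b, ha, hb, hval⟩
  have hnorm : a ^ 2 - b ^ 2 * f ∉ maximalIdeal R := fun h => ha <|
    (maximalIdeal.isMaximal R).isPrime.mem_of_pow_mem 2 <| by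
      simpa using add_mem h (Ideal.mul_mem_right f _ (Ideal.pow_mem_of_mem _ (hIm hb) 2 two_pos))
  exact pcc_isUnit_of_isUnit_norm s hb hval (notMem_maximalIdeal.mp hnorm)

end PseudocanonicalCover

/-- If `(R, m)` is local and `I ≠ R`, then `S(f)` is local with maximal
ideal `m_S = {a + b·t : a ∈ m, b ∈ I}`: `m_S` is a proper ideal of `S` and every element
of `S` not in `m_S` is a unit of `S`. -/
theorem statement1 {R : Type*} [CommRing R] [IsLocalRing R]
    (I : Ideal R) (hI : I ≠ ⊤) (f : R) :
    ∃ mS : Ideal (pcc I f),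
      Subtype.val '' (mS : Set (pcc I f)) = mSSet (IsLocalRing.maximalIdeal R) I f ∧
      mS ≠ ⊤ ∧
      ∀ s : pcc I f, s ∉ mS → IsUnit s := by
  have hIm : I ≤ IsLocalRing.maximalIdeal R := IsLocalRing.le_maximalIdeal hI
  exact ⟨mSIdeal _ I f hIm, val_image_mSIdeal hIm,
    mSIdeal_ne_top hIm (IsLocalRing.maximalIdeal.isMaximal R).ne_top,
    fun _ => isUnit_of_notMem_mSIdeal hIm⟩
end

section
/- Let R be a commutative ring, I a nonzero ideal of R, f ∈ R, and S = S(f) the pseudocanonical cover of R via f. Then S is an integral domain if and only if R is an integral domain and f is not a square in the total ring of fractions of R, i.e., there is no element g of the localization of R at its set of nonzerodivisors with g² equal to the image of f. -/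
open Polynomial

/-!
The ring `A = R[T]/(T² - f)` is free over `R` on `1, t`, and `(a + b t)(a - b t) = a² - f b² ∈ R`.
Hence `A` is a domain iff `R` is one and `a² = f b²` only for `a = b = 0`, i.e. iff `f` is not a
square in the total ring of fractions. For `0 ≠ u ∈ I`, multiplication by `u` maps `A` into
`S = R + I t` and is injective once `R` is a domain, so `S` is a domain iff `A` is.
-/

theorem exists_sq_eq_algebraMap_iff {R K : Type*} [CommRing R] [CommRing K] [Algebra R K]
    [IsFractionRing R K] (f : R) :
    (∃ g : K, g ^ 2 = algebraMap R K f) ↔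
      ∃ a, ∃ s ∈ nonZeroDivisors R, a ^ 2 = f * s ^ 2 := by
  constructor
  · rintro ⟨g, hg⟩
    obtain ⟨⟨a, s⟩, rfl⟩ := IsLocalization.mk'_surjective (nonZeroDivisors R) g
    refine ⟨a, s, s.2, IsFractionRing.injective R K ?_⟩
    rw [map_pow, map_mul, map_pow, ← IsLocalization.mk'_spec K a s, mul_pow, ← hg]
  · rintro ⟨a, s, hs, h⟩
    refine ⟨IsLocalization.mk' K a ⟨s, hs⟩, ?_⟩
    rw [← IsLocalization.mk'_pow, IsLocalization.mk'_eq_iff_eq_mul]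
    simp [h]

namespace PseudocanonicalCover

variable {R K : Type*} [CommRing R] [CommRing K] [Algebra R K] {f : R}

local notation "ι" => algebraMap R (AdjoinRoot (X ^ 2 - C f))
local notation "t" => AdjoinRoot.root (X ^ 2 - C f)

theorem root_sq_eq_algebraMap : t ^ 2 = ι f := by
  have h := AdjoinRoot.eval₂_root (X ^ 2 - C f)
  simp only [eval₂_sub, eval₂_pow, eval₂_X, eval₂_C, sub_eq_zero] at h
  exact h

theorem algebraMap_add_mul_root_eq_mk (a b : R) :
    ι a + ι b * t = AdjoinRoot.mk (X ^ 2 - C f) (C b * X + C a) := by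
  rw [map_add, map_mul, AdjoinRoot.mk_C, AdjoinRoot.mk_C, AdjoinRoot.mk_X,
    ← AdjoinRoot.algebraMap_eq, add_comm]

theorem algebraMap_add_mul_root_eq_zero_iff [Nontrivial R] {a b : R} :
    ι a + ι b * t = 0 ↔ a = 0 ∧ b = 0 := by
  refine ⟨fun h => ?_, by rintro ⟨rfl, rfl⟩; simp⟩
  have hmonic : (X ^ 2 - C f).Monic := monic_X_pow_sub_C f two_ne_zero
  have hlt : (C b * X + C a).degree < (X ^ 2 - C f).degree := by
    rw [degree_X_pow_sub_C two_pos]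
    exact (degree_linear_le).trans_lt (by norm_num)
  have hpoly : C b * X + C a = 0 := by
    rw [algebraMap_add_mul_root_eq_mk] at h
    have := congrArg (AdjoinRoot.modByMonicHom hmonic) h
    rwa [AdjoinRoot.modByMonicHom_mk, (modByMonic_eq_self_iff hmonic).mpr hlt, map_zero] at this
  exact ⟨by simpa using congrArg (coeff · 0) hpoly, by simpa using congrArg (coeff · 1) hpoly⟩

theorem algebraMap_injective [Nontrivial R] : Function.Injective ι := by
  intro a b h
  have : ι (a - b) + ι 0 * t = 0 := by rw [map_sub, h]; simp
  exact sub_eq_zero.mp (algebraMap_add_mul_root_eq_zero_iff.mp this).1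

theorem exists_eq_algebraMap_add_mul_root [Nontrivial R] (x : AdjoinRoot (X ^ 2 - C f)) :
    ∃ a b : R, x = ι a + ι b * t := by
  have hmonic : (X ^ 2 - C f).Monic := monic_X_pow_sub_C f two_ne_zero
  induction x using AdjoinRoot.induction_on with | ih q =>
  have hdeg : (q %ₘ (X ^ 2 - C f)).degree ≤ 1 := by
    have := degree_modByMonic_lt q hmonic
    rw [degree_X_pow_sub_C two_pos] at this
    exact Order.le_of_lt_succ this
  refine ⟨(q %ₘ (X ^ 2 - C f)).coeff 0, (q %ₘ (X ^ 2 - C f)).coeff 1, ?_⟩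
  rw [algebraMap_add_mul_root_eq_mk, ← eq_X_add_C_of_degree_le_one hdeg]
  exact (AdjoinRoot.mk_leftInverse hmonic (AdjoinRoot.mk _ q)).symm

theorem algebraMap_add_mul_root_mul_sub (a b : R) :
    (ι a + ι b * t) * (ι a - ι b * t) = ι (a ^ 2 - f * b ^ 2) := by
  rw [map_sub, map_mul, map_pow, map_pow]
  linear_combination (-(ι b) ^ 2) * root_sq_eq_algebraMap (f := f)

theorem eq_zero_of_algebraMap_mul_eq_zero [IsDomain R] {u : R} (hu : u ≠ 0)
    {x : AdjoinRoot (X ^ 2 - C f)} (h : ι u * x = 0) : x = 0 := by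
  obtain ⟨a, b, rfl⟩ := exists_eq_algebraMap_add_mul_root x
  rw [show ι u * (ι a + ι b * t) = ι (u * a) + ι (u * b) * t by simp only [map_mul]; ring,
    algebraMap_add_mul_root_eq_zero_iff, mul_eq_zero, mul_eq_zero] at h
  rw [h.1.resolve_left hu, h.2.resolve_left hu]
  simp

theorem eq_zero_of_sq_eq_mul_sq [IsDomain R] [IsFractionRing R K]
    (hf : ¬∃ g : K, g ^ 2 = algebraMap R K f) {a b : R}
    (h : a ^ 2 = f * b ^ 2) : a = 0 ∧ b = 0 := by
  have hb : b = 0 := by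
    by_contra hb
    exact hf ((exists_sq_eq_algebraMap_iff f).mpr ⟨a, b, mem_nonZeroDivisors_of_ne_zero hb, h⟩)
  exact ⟨pow_eq_zero_iff two_ne_zero |>.mp (by simpa [hb] using h), hb⟩

theorem isDomain_adjoinRoot_iff [IsFractionRing R K] :
    IsDomain (AdjoinRoot (X ^ 2 - C f)) ↔
      IsDomain R ∧ ¬∃ g : K, g ^ 2 = algebraMap R K f := by
  constructor
  · intro hA
    have : Nontrivial R := (ι).domain_nontrivial
    have : IsDomain R := algebraMap_injective.isDomain ι
    refine ⟨this, ?_⟩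
    rw [exists_sq_eq_algebraMap_iff]
    rintro ⟨a, s, hs, h⟩
    have hzero : (ι a + ι s * t) * (ι a - ι s * t) = 0 := by
      rw [algebraMap_add_mul_root_mul_sub, h, sub_self, map_zero]
    refine nonZeroDivisors.ne_zero hs ?_
    rcases mul_eq_zero.mp hzero with h | h
    · exact (algebraMap_add_mul_root_eq_zero_iff.mp h).2
    · have h' : ι a + ι (-s) * t = 0 := by rw [map_neg]; linear_combination h
      exact neg_eq_zero.mp (algebraMap_add_mul_root_eq_zero_iff.mp h').2
  · rintro ⟨hR, hf⟩
    have : Nontrivial (AdjoinRoot (X ^ 2 - C f)) := algebraMap_injective.nontrivial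
    suffices NoZeroDivisors (AdjoinRoot (X ^ 2 - C f)) from NoZeroDivisors.to_isDomain _
    refine ⟨fun {x y} hxy => ?_⟩
    obtain ⟨a, b, rfl⟩ := exists_eq_algebraMap_add_mul_root x
    obtain ⟨c, d, rfl⟩ := exists_eq_algebraMap_add_mul_root y
    have hnorm : (a ^ 2 - f * b ^ 2) * (c ^ 2 - f * d ^ 2) = 0 := by
      apply algebraMap_injective (f := f)
      rw [map_mul, ← algebraMap_add_mul_root_mul_sub, ← algebraMap_add_mul_root_mul_sub,
        map_zero]
      linear_combination (ι a - ι b * t) * (ι c - ι d * t) * hxy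
    refine (mul_eq_zero.mp hnorm).imp (fun h => ?_) (fun h => ?_) <;>
    · obtain ⟨rfl, rfl⟩ := eq_zero_of_sq_eq_mul_sq hf (sub_eq_zero.mp h)
      simp

variable {I : Ideal R}

theorem algebraMap_mul_mem_pcc [Nontrivial R] {u : R} (hu : u ∈ I)
    (x : AdjoinRoot (X ^ 2 - C f)) : ι u * x ∈ pcc I f := by
  obtain ⟨a, b, rfl⟩ := exists_eq_algebraMap_add_mul_root x
  exact ⟨u * a, u * b, I.mul_mem_right b hu, by simp only [map_mul]; ring⟩

theorem toPcc_injective [Nontrivial R] : Function.Injective (toPcc I f) :=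
  fun _ _ h => algebraMap_injective (congrArg Subtype.val h)

theorem isDomain_pcc_iff (hI : I ≠ ⊥) :
    IsDomain (pcc I f) ↔ IsDomain (AdjoinRoot (X ^ 2 - C f)) := by
  refine ⟨fun hS => ?_, fun _ => inferInstance⟩
  have : Nontrivial R := (toPcc I f).domain_nontrivial
  have : IsDomain R := toPcc_injective.isDomain (toPcc I f)
  have : Nontrivial (AdjoinRoot (X ^ 2 - C f)) := Subtype.val_injective.nontrivial (α := pcc I f)
  obtain ⟨u, hu, hu0⟩ := Submodule.exists_mem_ne_zero_of_ne_bot hI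
  suffices NoZeroDivisors (AdjoinRoot (X ^ 2 - C f)) from NoZeroDivisors.to_isDomain _
  refine ⟨fun {x y} hxy => ?_⟩
  have hprod : (⟨ι u * x, algebraMap_mul_mem_pcc hu x⟩ : pcc I f) *
      ⟨ι u * y, algebraMap_mul_mem_pcc hu y⟩ = 0 :=
    Subtype.ext <| by
      simp only [Subring.coe_mul, Subring.coe_zero]
      linear_combination ι u ^ 2 * hxy
  refine (mul_eq_zero.mp hprod).imp (fun h => ?_) (fun h => ?_) <;>
  exact eq_zero_of_algebraMap_mul_eq_zero hu0 (congrArg Subtype.val h)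

end PseudocanonicalCover

/-- For a nonzero ideal `I`, the pseudocanonical cover `S(f)` is a
domain if and only if `R` is a domain and `f` is not a square in the total ring of
fractions of `R`. -/
theorem statement2 {R : Type*} [CommRing R] (I : Ideal R) (hI : I ≠ ⊥) (f : R) :
    IsDomain (pcc I f) ↔
      (IsDomain R ∧
        ¬∃ g : Localization (nonZeroDivisors R),
          g ^ 2 = algebraMap R (Localization (nonZeroDivisors R)) f) := by
  rw [PseudocanonicalCover.isDomain_pcc_iff hI,
    PseudocanonicalCover.isDomain_adjoinRoot_iff (K := Localization (nonZeroDivisors R))]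
end

section
/- Let (R, m) be a commutative local ring, I an ideal of R with I ≠ R, f ∈ R, and S = S(f) the pseudocanonical cover of R via f, with m_S = {a + b·t : a ∈ m, b ∈ I}. Let x₁, …, x_d ∈ m, let J = (x₁, …, x_d)R, and let u ∈ I be such that: (i) m·u ⊆ J·I; (ii) every b ∈ I with m·b ⊆ J·I satisfies b ∈ R·u + J·I; and (iii) every a ∈ R with a·I ⊆ J·I satisfies a ∈ J. Then u·t generates the socle of S modulo JS: one has m_S·(u·t) ⊆ JS, and every s ∈ S with m_S·s ⊆ JS satisfies s ∈ JS + R·(u·t). -/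
/-!
Write elements of `S` as `a + b·t` with `a ∈ R`, `b ∈ I`; these coordinates are unique because
`1, t` is an `R`-basis of `R[T]/(T² − f)`. In these coordinates `JS = {a + b·t : a ∈ J, b ∈ JI}`.
Multiplying `s = a + b·t` by `r ∈ m` gives `ra + rb·t`, and by `c·t` (`c ∈ I`) gives
`cbf + ca·t`. So if `m_S·s ⊆ JS` then `mb ⊆ JI`, whence `b ∈ Ru + JI` by (ii), and `Ia ⊆ JI`,
whence `a ∈ J` by (iii). Conversely `(a + b·t)·ut = buf + au·t` lies in `JS` by (i), using `b ∈ m`.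
-/

open Polynomial

section AddMulRoot

variable {R : Type*} [CommRing R] (f : R)

noncomputable def addMulRoot (a b : R) : AdjoinRoot (X ^ 2 - C f) :=
  algebraMap R _ a + algebraMap R _ b * AdjoinRoot.root (X ^ 2 - C f)

theorem root_sq_eq_algebraMap :
    AdjoinRoot.root (X ^ 2 - C f) ^ 2 = algebraMap R _ f := by
  have h := AdjoinRoot.eval₂_root (X ^ 2 - C f)
  rwa [eval₂_sub, eval₂_pow, eval₂_X, eval₂_C, sub_eq_zero] at h

theorem addMulRoot_zero : addMulRoot f 0 0 = 0 := by
  simp [addMulRoot]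

theorem addMulRoot_add (a b c e : R) :
    addMulRoot f a b + addMulRoot f c e = addMulRoot f (a + c) (b + e) := by
  simp only [addMulRoot, map_add]
  ring

theorem addMulRoot_mul (a b c e : R) :
    addMulRoot f a b * addMulRoot f c e = addMulRoot f (a * c + b * e * f) (a * e + b * c) := by
  simp only [addMulRoot, map_add, map_mul]
  linear_combination (algebraMap R _ b * algebraMap R _ e) * root_sq_eq_algebraMap f

theorem addMulRoot_eq_mk (a b : R) :
    addMulRoot f a b = AdjoinRoot.mk (X ^ 2 - C f) (C a + C b * X) := by
  simp [addMulRoot, AdjoinRoot.algebraMap_eq]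

theorem modByMonicHom_addMulRoot [Nontrivial R] (a b : R) :
    AdjoinRoot.modByMonicHom (monic_X_pow_sub_C f two_ne_zero) (addMulRoot f a b) =
      C a + C b * X := by
  rw [addMulRoot_eq_mk, AdjoinRoot.modByMonicHom_mk,
    modByMonic_eq_self_iff (monic_X_pow_sub_C f two_ne_zero), degree_X_pow_sub_C two_pos, add_comm]
  exact degree_linear_le.trans_lt (by norm_num)

theorem addMulRoot_inj [Nontrivial R] {a b c e : R} :
    addMulRoot f a b = addMulRoot f c e ↔ a = c ∧ b = e := by
  refine ⟨fun h => ?_, fun ⟨hac, hbe⟩ => hac ▸ hbe ▸ rfl⟩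
  have h' := congrArg (AdjoinRoot.modByMonicHom (monic_X_pow_sub_C f two_ne_zero)) h
  simp only [modByMonicHom_addMulRoot] at h'
  exact ⟨by simpa using congrArg (coeff · 0) h', by simpa using congrArg (coeff · 1) h'⟩

end AddMulRoot

section PseudocanonicalCover

variable {R : Type*} [CommRing R] {I : Ideal R} {f : R}

theorem exists_coe_eq_addMulRoot (s : pcc I f) :
    ∃ a b, b ∈ I ∧ (s : AdjoinRoot (X ^ 2 - C f)) = addMulRoot f a b :=
  s.2

theorem mem_mSSet_iff {m : Ideal R} {y : AdjoinRoot (X ^ 2 - C f)} :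
    y ∈ mSSet m I f ↔ ∃ a b, a ∈ m ∧ b ∈ I ∧ y = addMulRoot f a b :=
  Iff.rfl

theorem coe_toPcc (a : R) : (toPcc I f a : AdjoinRoot (X ^ 2 - C f)) = addMulRoot f a 0 := by
  simp [toPcc, addMulRoot]

theorem coe_utElem (b : R) (hb : b ∈ I) :
    (utElem I f b hb : AdjoinRoot (X ^ 2 - C f)) = addMulRoot f 0 b := by
  simp [utElem, addMulRoot]

theorem toPcc_mul_utElem (j c : R) (hc : c ∈ I) :
    toPcc I f j * utElem I f c hc = utElem I f (j * c) (I.mul_mem_left j hc) := by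
  ext
  rw [Subring.coe_mul, coe_toPcc, coe_utElem, coe_utElem, addMulRoot_mul]
  congr 1 <;> ring

theorem utElem_add {p q : R} (hp : p ∈ I) (hq : q ∈ I) :
    utElem I f p hp + utElem I f q hq = utElem I f (p + q) (I.add_mem hp hq) := by
  ext
  rw [Subring.coe_add, coe_utElem, coe_utElem, coe_utElem, addMulRoot_add, add_zero]

theorem utElem_mem_map {J : Ideal R} {b : R} (hb : b ∈ J * I) :
    utElem I f b (Ideal.mul_le_right hb) ∈ J.map (toPcc I f) := by
  induction hb using Submodule.mul_induction_on' with
  | mem_mul_mem j hj c hc =>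
    rw [← toPcc_mul_utElem j c hc]
    exact Ideal.mul_mem_right _ _ (Ideal.mem_map_of_mem _ hj)
  | add p hp q hq ihp ihq =>
    rw [← utElem_add (Ideal.mul_le_right hp) (Ideal.mul_le_right hq)]
    exact add_mem ihp ihq

theorem mem_map_toPcc_of_mem (J : Ideal R) {s : pcc I f} {a b : R}
    (hs : (s : AdjoinRoot (X ^ 2 - C f)) = addMulRoot f a b) (ha : a ∈ J) (hb : b ∈ J * I) :
    s ∈ J.map (toPcc I f) := by
  have : s = toPcc I f a + utElem I f b (Ideal.mul_le_right hb) := by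
    ext
    rw [hs, Subring.coe_add, coe_toPcc, coe_utElem, addMulRoot_add, add_zero, zero_add]
  exact this ▸ add_mem (Ideal.mem_map_of_mem _ ha) (utElem_mem_map hb)

theorem exists_addMulRoot_of_mem_map {J : Ideal R} {s : pcc I f} (hs : s ∈ J.map (toPcc I f)) :
    ∃ a ∈ J, ∃ b ∈ J * I, (s : AdjoinRoot (X ^ 2 - C f)) = addMulRoot f a b := by
  induction hs using Submodule.span_induction with
  | mem y hy =>
    obtain ⟨j, hj, rfl⟩ := hy
    exact ⟨j, hj, 0, zero_mem _, coe_toPcc j⟩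
  | zero => exact ⟨0, zero_mem _, 0, zero_mem _, (addMulRoot_zero f).symm⟩
  | add y z _ _ hy hz =>
    obtain ⟨a, ha, b, hb, hy⟩ := hy
    obtain ⟨c, hc, e, he, hz⟩ := hz
    exact ⟨a + c, add_mem ha hc, b + e, add_mem hb he,
      by rw [Subring.coe_add, hy, hz, addMulRoot_add]⟩
  | smul r y _ hy =>
    obtain ⟨a, ha, b, hb, hy⟩ := hy
    obtain ⟨p, q, hq, hr⟩ := exists_coe_eq_addMulRoot r
    refine ⟨p * a + q * b * f, ?_, p * b + q * a, ?_, ?_⟩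
    · exact add_mem (J.mul_mem_left p ha)
        (J.mul_mem_right f (J.mul_mem_left q (Ideal.mul_le_left hb)))
    · exact add_mem ((J * I).mul_mem_left p hb) (mul_comm q a ▸ Ideal.mul_mem_mul ha hq)
    · rw [smul_eq_mul, Subring.coe_mul, hr, hy, addMulRoot_mul]

theorem mem_map_toPcc_iff [Nontrivial R] (J : Ideal R) {s : pcc I f} {a b : R}
    (hs : (s : AdjoinRoot (X ^ 2 - C f)) = addMulRoot f a b) :
    s ∈ J.map (toPcc I f) ↔ a ∈ J ∧ b ∈ J * I := by
  refine ⟨fun h => ?_, fun ⟨ha, hb⟩ => mem_map_toPcc_of_mem J hs ha hb⟩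
  obtain ⟨a', ha', b', hb', hs'⟩ := exists_addMulRoot_of_mem_map h
  obtain ⟨rfl, rfl⟩ := (addMulRoot_inj f).1 (hs.symm.trans hs')
  exact ⟨ha', hb'⟩

theorem mul_mem_map_toPcc_iff [Nontrivial R] (J : Ideal R) {y s : pcc I f} {a b c e : R}
    (hy : (y : AdjoinRoot (X ^ 2 - C f)) = addMulRoot f a b)
    (hs : (s : AdjoinRoot (X ^ 2 - C f)) = addMulRoot f c e) :
    y * s ∈ J.map (toPcc I f) ↔ a * c + b * e * f ∈ J ∧ a * e + b * c ∈ J * I :=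
  mem_map_toPcc_iff J (by rw [Subring.coe_mul, hy, hs, addMulRoot_mul])

end PseudocanonicalCover

theorem statement4_general {R : Type*} [CommRing R] [IsLocalRing R]
    (I : Ideal R) (hI : I ≠ ⊤) (f : R) {d : ℕ} (x : Fin d → R)
    (u : R) (hu : u ∈ I)
    (h1 : ∀ r ∈ IsLocalRing.maximalIdeal R, r * u ∈ Ideal.span (Set.range x) * I)
    (h2 : ∀ b ∈ I,
      (∀ r ∈ IsLocalRing.maximalIdeal R, r * b ∈ Ideal.span (Set.range x) * I) →
      b ∈ Ideal.span {u} + Ideal.span (Set.range x) * I)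
    (h3 : ∀ a : R, (∀ b ∈ I, a * b ∈ Ideal.span (Set.range x) * I) →
      a ∈ Ideal.span (Set.range x)) :
    (∀ s : pcc I f,
      (s : AdjoinRoot (X ^ 2 - C f)) ∈ mSSet (IsLocalRing.maximalIdeal R) I f →
      s * utElem I f u hu ∈ (Ideal.span (Set.range x)).map (toPcc I f)) ∧
    (∀ s : pcc I f,
      (∀ y : pcc I f,
        (y : AdjoinRoot (X ^ 2 - C f)) ∈ mSSet (IsLocalRing.maximalIdeal R) I f →
        y * s ∈ (Ideal.span (Set.range x)).map (toPcc I f)) →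
      ∃ j ∈ (Ideal.span (Set.range x)).map (toPcc I f),
        ∃ r : R, s = j + toPcc I f r * utElem I f u hu) := by
  set J := Ideal.span (Set.range x)
  refine ⟨fun s hs_max => ?_, fun s hs_soc => ?_⟩
  · obtain ⟨a, b, ha, hb, hs⟩ := mem_mSSet_iff.1 hs_max
    rw [mul_mem_map_toPcc_iff J hs (coe_utElem u hu)]
    simp only [mul_zero, zero_add, add_zero]
    exact ⟨J.mul_mem_right f (Ideal.mul_le_left (h1 b (IsLocalRing.le_maximalIdeal hI hb))),
      h1 a ha⟩
  obtain ⟨a, b, hb, hs⟩ := exists_coe_eq_addMulRoot s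
  have ha : a ∈ J := h3 a fun c hc => by
    have := (mul_mem_map_toPcc_iff J (coe_utElem c hc) hs).1
      (hs_soc _ (mem_mSSet_iff.2 ⟨0, c, zero_mem _, hc, coe_utElem c hc⟩))
    simpa [mul_comm] using this.2
  have hb_soc : ∀ r ∈ IsLocalRing.maximalIdeal R, r * b ∈ J * I := fun r hr => by
    have := (mul_mem_map_toPcc_iff J (coe_toPcc r) hs).1
      (hs_soc _ (mem_mSSet_iff.2 ⟨r, 0, hr, I.zero_mem, coe_toPcc r⟩))
    simpa using this.2
  obtain ⟨y, hy, z, hz, rfl⟩ := Submodule.mem_sup.1 (h2 b hb hb_soc)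
  obtain ⟨r, rfl⟩ := Ideal.mem_span_singleton'.1 hy
  refine ⟨toPcc I f a + utElem I f z (Ideal.mul_le_right hz),
    add_mem (Ideal.mem_map_of_mem _ ha) (utElem_mem_map hz), r, ?_⟩
  rw [add_assoc, toPcc_mul_utElem, utElem_add]
  ext
  rw [hs, Subring.coe_add, coe_toPcc, coe_utElem, addMulRoot_add]
  congr 1 <;> ring

/-- If `u ∈ I` generates the socle of `I/JI` (hypotheses (i), (ii))
and `I/JI` is faithful over `R/J` (hypothesis (iii)), then `u·t` generates the socle of
`S/JS`: `m_S·(u·t) ⊆ JS`, and every `s ∈ S` with `m_S·s ⊆ JS` lies in `JS + R·(u·t)`. -/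
theorem statement4 {R : Type*} [CommRing R] [IsLocalRing R]
    (I : Ideal R) (hI : I ≠ ⊤) (f : R) {d : ℕ} (x : Fin d → R)
    (hx : ∀ i, x i ∈ IsLocalRing.maximalIdeal R)
    (u : R) (hu : u ∈ I)
    (h1 : ∀ r ∈ IsLocalRing.maximalIdeal R, r * u ∈ Ideal.span (Set.range x) * I)
    (h2 : ∀ b ∈ I,
      (∀ r ∈ IsLocalRing.maximalIdeal R, r * b ∈ Ideal.span (Set.range x) * I) →
      b ∈ Ideal.span {u} + Ideal.span (Set.range x) * I)
    (h3 : ∀ a : R, (∀ b ∈ I, a * b ∈ Ideal.span (Set.range x) * I) →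
      a ∈ Ideal.span (Set.range x)) :
    (∀ s : pcc I f,
      (s : AdjoinRoot (X ^ 2 - C f)) ∈ mSSet (IsLocalRing.maximalIdeal R) I f →
      s * utElem I f u hu ∈ (Ideal.span (Set.range x)).map (toPcc I f)) ∧
    (∀ s : pcc I f,
      (∀ y : pcc I f,
        (y : AdjoinRoot (X ^ 2 - C f)) ∈ mSSet (IsLocalRing.maximalIdeal R) I f →
        y * s ∈ (Ideal.span (Set.range x)).map (toPcc I f)) →
      ∃ j ∈ (Ideal.span (Set.range x)).map (toPcc I f),
        ∃ r : R, s = j + toPcc I f r * utElem I f u hu) :=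
  statement4_general I hI f x u hu h1 h2 h3
end

section
/- Let R be a commutative ring of prime characteristic p with p odd, I an ideal of R, f ∈ R, and S = S(f) the pseudocanonical cover of R via f. Let x₁, …, x_d ∈ R, u ∈ I, and q = p^e for some e ≥ 0. Then (u·t)^q lies in the ideal of S generated by x₁^q, …, x_d^q if and only if u^q · f^((q−1)/2) lies in the R-submodule (x₁^q, …, x_d^q)·I of R. -/
open Polynomial

lemma pcc_aux_zero {R : Type*} [CommRing R] [Nontrivial R] {f a b : R}
    (h : algebraMap R (AdjoinRoot (X ^ 2 - C f)) a +
        algebraMap R (AdjoinRoot (X ^ 2 - C f)) b * AdjoinRoot.root (X ^ 2 - C f) = 0) :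
    a = 0 ∧ b = 0 := by
  have hm : (X ^ 2 - C f).Monic := monic_X_pow_sub_C f two_ne_zero
  have h' : AdjoinRoot.mk (X ^ 2 - C f) (C a + C b * X) = 0 := by
    rw [map_add, map_mul, AdjoinRoot.mk_C, AdjoinRoot.mk_C, AdjoinRoot.mk_X]
    rw [AdjoinRoot.algebraMap_eq] at h
    exact h
  have hg : (C a + C b * X : R[X]) = 0 := by
    by_contra h0
    refine AdjoinRoot.mk_ne_zero_of_degree_lt hm h0 ?_ h'
    rw [degree_X_pow_sub_C (by norm_num : 0 < 2) f]
    calc degree (C a + C b * X) ≤ 1 := by rw [add_comm]; exact degree_linear_le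
    _ < 2 := by norm_num
  constructor
  · have h0 := congrArg (fun p => Polynomial.coeff p 0) hg
    simpa using h0
  · have h1 := congrArg (fun p => Polynomial.coeff p 1) hg
    simpa using h1

lemma mem_span_mul_iff' {R : Type*} [CommRing R] {ι : Type*} [Fintype ι] (v : ι → R)
    (I : Ideal R) (c : R) :
    c ∈ Ideal.span (Set.range v) * I ↔
      ∃ b : ι → R, (∀ i, b i ∈ I) ∧ c = ∑ i, v i * b i := by
  constructor
  · intro hc
    refine Submodule.mul_induction_on hc ?_ ?_
    · intro m hm n hn
      obtain ⟨a, ha⟩ := (Submodule.mem_span_range_iff_exists_fun R).mp hm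
      refine ⟨fun i => a i * n, fun i => I.mul_mem_left _ hn, ?_⟩
      rw [← ha, Finset.sum_mul]
      exact Finset.sum_congr rfl fun i _ => by rw [smul_eq_mul]; ring
    · rintro x y ⟨b, hb, rfl⟩ ⟨b', hb', rfl⟩
      exact ⟨b + b', fun i => I.add_mem (hb i) (hb' i), by
        simp [Finset.sum_add_distrib, mul_add]⟩
  · rintro ⟨b, hb, rfl⟩
    exact Ideal.sum_mem _ fun i _ =>
      Ideal.mul_mem_mul (Ideal.subset_span ⟨i, rfl⟩) (hb i)

/-- In odd prime characteristic `p`, with `q = p^e`, the element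
`(u·t)^q` lies in the ideal of `S(f)` generated by `x₁^q, …, x_d^q` if and only if
`u^q·f^((q−1)/2)` lies in the submodule `(x₁^q, …, x_d^q)·I` of `R`. -/
theorem statement6 {R : Type*} [CommRing R] (p : ℕ) (hp : p.Prime) (hodd : Odd p)
    [CharP R p] (I : Ideal R) (f : R) {d : ℕ} (x : Fin d → R)
    (u : R) (hu : u ∈ I) (e : ℕ) :
    utElem I f u hu ^ p ^ e ∈
        Ideal.span (Set.range fun i => toPcc I f (x i ^ p ^ e)) ↔
      u ^ p ^ e * f ^ ((p ^ e - 1) / 2) ∈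
        Ideal.span (Set.range fun i => x i ^ p ^ e) * I := by
  haveI : Nontrivial R := CharP.nontrivial_of_char_ne_one hp.ne_one
  set q := p ^ e with hq
  have hqodd : Odd q := hodd.pow
  obtain ⟨m, hm⟩ := hqodd
  have hq1 : 1 ≤ q := Nat.one_le_iff_ne_zero.mpr (by omega)
  have hm2 : (q - 1) / 2 = m := by omega
  have hroot : AdjoinRoot.root (X ^ 2 - C f) ^ 2 =
      algebraMap R (AdjoinRoot (X ^ 2 - C f)) f := by
    have h := AdjoinRoot.eval₂_root (X ^ 2 - C f)
    simp only [eval₂_sub, eval₂_pow, eval₂_X, eval₂_C, sub_eq_zero] at h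
    exact h
  have ht : AdjoinRoot.root (X ^ 2 - C f) ^ q =
      algebraMap R (AdjoinRoot (X ^ 2 - C f)) (f ^ m) * AdjoinRoot.root (X ^ 2 - C f) := by
    calc AdjoinRoot.root (X ^ 2 - C f) ^ q
        = (AdjoinRoot.root (X ^ 2 - C f) ^ 2) ^ m * AdjoinRoot.root (X ^ 2 - C f) := by
          rw [← pow_mul, ← pow_succ, ← hm]
      _ = _ := by rw [hroot, map_pow]
  have htoPcc : ∀ r : R, ((toPcc I f r : pcc I f) : AdjoinRoot (X ^ 2 - C f)) =
      algebraMap R (AdjoinRoot (X ^ 2 - C f)) r := fun r => rfl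
  have hval : ((utElem I f u hu ^ q : pcc I f) : AdjoinRoot (X ^ 2 - C f)) =
      algebraMap R (AdjoinRoot (X ^ 2 - C f)) (u ^ q * f ^ m) *
        AdjoinRoot.root (X ^ 2 - C f) := by
    rw [SubmonoidClass.coe_pow]
    show (algebraMap R (AdjoinRoot (X ^ 2 - C f)) u * AdjoinRoot.root (X ^ 2 - C f)) ^ q = _
    rw [mul_pow, ht, map_mul, map_pow, map_pow]
    ring
  rw [hm2]
  constructor
  · intro h
    obtain ⟨c, hc⟩ := (Submodule.mem_span_range_iff_exists_fun (pcc I f)).mp h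
    have hmem : ∀ i, ∃ a b : R, b ∈ I ∧
        ((c i : pcc I f) : AdjoinRoot (X ^ 2 - C f)) =
          algebraMap R (AdjoinRoot (X ^ 2 - C f)) a +
          algebraMap R (AdjoinRoot (X ^ 2 - C f)) b * AdjoinRoot.root (X ^ 2 - C f) :=
      fun i => (c i).2
    choose a b hb hab using hmem
    have hval2 := congrArg (Subtype.val) hc
    simp only [smul_eq_mul, AddSubmonoidClass.coe_finset_sum, MulMemClass.coe_mul,
      hval, htoPcc] at hval2
    simp only [hab] at hval2
    have hsum : ∑ i, ((algebraMap R (AdjoinRoot (X ^ 2 - C f)) (a i) +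
          algebraMap R (AdjoinRoot (X ^ 2 - C f)) (b i) * AdjoinRoot.root (X ^ 2 - C f)) *
          algebraMap R (AdjoinRoot (X ^ 2 - C f)) (x i ^ q))
        = algebraMap R (AdjoinRoot (X ^ 2 - C f)) (∑ i, a i * x i ^ q) +
          algebraMap R (AdjoinRoot (X ^ 2 - C f)) (∑ i, b i * x i ^ q) *
            AdjoinRoot.root (X ^ 2 - C f) := by
      rw [map_sum, map_sum, Finset.sum_mul, ← Finset.sum_add_distrib]
      refine Finset.sum_congr rfl fun i _ => ?_
      rw [map_mul, map_mul]; ring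
    rw [hsum] at hval2
    have key : algebraMap R (AdjoinRoot (X ^ 2 - C f)) (∑ i, a i * x i ^ q) +
        algebraMap R (AdjoinRoot (X ^ 2 - C f)) ((∑ i, b i * x i ^ q) - u ^ q * f ^ m) *
          AdjoinRoot.root (X ^ 2 - C f) = 0 := by
      rw [map_sub]
      linear_combination hval2
    obtain ⟨-, h2⟩ := pcc_aux_zero key
    refine (mem_span_mul_iff' _ I _).mpr ⟨b, hb, ?_⟩
    have h2' := sub_eq_zero.mp h2
    rw [← h2']
    exact Finset.sum_congr rfl fun i _ => mul_comm _ _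
  · intro h
    obtain ⟨b, hb, heq⟩ := (mem_span_mul_iff' _ I _).mp h
    refine (Submodule.mem_span_range_iff_exists_fun (pcc I f)).mpr
      ⟨fun i => ⟨algebraMap R (AdjoinRoot (X ^ 2 - C f)) (b i) * AdjoinRoot.root (X ^ 2 - C f),
        0, b i, hb i, by simp⟩, ?_⟩
    apply Subtype.ext
    simp only [smul_eq_mul, AddSubmonoidClass.coe_finset_sum, MulMemClass.coe_mul, hval, htoPcc]
    rw [heq, map_sum, Finset.sum_mul]
    refine Finset.sum_congr rfl fun i _ => ?_
    rw [map_mul]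
    ring
end

section
/- Let (R, m) be a commutative local ring of characteristic 2, I an ideal of R with I ≠ R, f ∈ R, and S = S(f) the pseudocanonical cover of R via f. Let x₁, …, x_d ∈ m, J = (x₁, …, x_d)R, and u ∈ I such that: (i) u ∉ J·I; (ii) m·u ⊆ J·I; and (iii) every a ∈ R with a·I ⊆ J·I satisfies a ∈ J. Then u·t ∉ JS, yet (u·t)² lies in the ideal of S generated by x₁², …, x_d². In particular the ideal JS of S is not Frobenius closed. -/
open Polynomial

/-- The bracket power `J^[q]`: the ideal generated by the `q`-th powers of the
elements of `J`. -/
def bracketPow {B : Type*} [CommRing B] (J : Ideal B) (q : ℕ) : Ideal B :=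
  Ideal.span ((fun y => y ^ q) '' (J : Set B))

/-- An ideal `J` of a ring of prime characteristic `p` is Frobenius closed if every
`x` with `x^{p^e} ∈ J^[p^e]` for some `e ≥ 0` lies in `J`. -/
def FrobeniusClosed {B : Type*} [CommRing B] (p : ℕ) (J : Ideal B) : Prop :=
  ∀ x : B, (∃ e : ℕ, x ^ p ^ e ∈ bracketPow J (p ^ e)) → x ∈ J

section Aux

variable {R : Type*} [CommRing R]

lemma root_sq (f : R) :
    AdjoinRoot.root (X ^ 2 - C f) ^ 2 =
      algebraMap R (AdjoinRoot (X ^ 2 - C f)) f := by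
  have h := AdjoinRoot.eval₂_root (X ^ 2 - C f)
  simp only [eval₂_sub, eval₂_pow, eval₂_X, eval₂_C, sub_eq_zero] at h
  exact h

lemma rep_zero [Nontrivial R] (f a b : R)
    (h : algebraMap R (AdjoinRoot (X ^ 2 - C f)) a +
      algebraMap R (AdjoinRoot (X ^ 2 - C f)) b * AdjoinRoot.root (X ^ 2 - C f) = 0) :
    a = 0 ∧ b = 0 := by
  have hmk : AdjoinRoot.mk (X ^ 2 - C f) (C b * X + C a) = 0 := by
    rw [map_add, map_mul, AdjoinRoot.mk_C, AdjoinRoot.mk_C, AdjoinRoot.mk_X]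
    rw [AdjoinRoot.algebraMap_eq] at h
    rw [add_comm] at h
    exact h
  have hdvd : (X ^ 2 - C f) ∣ (C b * X + C a) := AdjoinRoot.mk_eq_zero.mp hmk
  have hmonic : (X ^ 2 - C f).Monic := monic_X_pow_sub_C f (by norm_num)
  have hp0 : C b * X + C a = 0 := by
    by_contra hne
    exact hmonic.not_dvd_of_natDegree_lt hne
      (by rw [natDegree_X_pow_sub_C]; exact lt_of_le_of_lt natDegree_linear_le one_lt_two) hdvd
  constructor
  · have := congrArg (fun p => Polynomial.coeff p 0) hp0
    simpa using this
  · have := congrArg (fun p => Polynomial.coeff p 1) hp0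
    simpa using this

lemma toPcc_val (I : Ideal R) (f : R) (a : R) :
    ((toPcc I f a : pcc I f) : AdjoinRoot (X ^ 2 - C f)) =
      algebraMap R (AdjoinRoot (X ^ 2 - C f)) a := rfl

end Aux

/-- In characteristic `2`, with `u` a socle generator of `I/JI`
(hypotheses (i), (ii)) and `I/JI` faithful over `R/J` (hypothesis (iii)), the element
`u·t` does not lie in `JS`, yet `(u·t)²` lies in the ideal of `S` generated by
`x₁², …, x_d²`; in particular `JS` is not Frobenius closed. -/
theorem statement8 {R : Type*} [CommRing R] [IsLocalRing R] [CharP R 2]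
    (I : Ideal R) (hI : I ≠ ⊤) (f : R) {d : ℕ} (x : Fin d → R)
    (hx : ∀ i, x i ∈ IsLocalRing.maximalIdeal R)
    (u : R) (hu : u ∈ I)
    (h1 : u ∉ Ideal.span (Set.range x) * I)
    (h2 : ∀ r ∈ IsLocalRing.maximalIdeal R, r * u ∈ Ideal.span (Set.range x) * I)
    (h3 : ∀ a : R, (∀ b ∈ I, a * b ∈ Ideal.span (Set.range x) * I) →
      a ∈ Ideal.span (Set.range x)) :
    utElem I f u hu ∉ (Ideal.span (Set.range x)).map (toPcc I f) ∧
    utElem I f u hu ^ 2 ∈ Ideal.span (Set.range fun i => toPcc I f (x i ^ 2)) ∧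
    ¬ FrobeniusClosed 2 ((Ideal.span (Set.range x)).map (toPcc I f)) := by 
  -- Nontrivial R, else h1 is contradictory
  have hnontriv : Nontrivial R := by
    rcases subsingleton_or_nontrivial R with hs | hn
    · exact absurd (Subsingleton.elim u 0 ▸ Ideal.zero_mem _) h1
    · exact hn
  set J : Ideal R := Ideal.span (Set.range x) with hJdef
  haveI : Fact (Nat.Prime 2) := ⟨Nat.prime_two⟩
  -- Part 1: u·t ∉ JS
  have hnot : utElem I f u hu ∉ J.map (toPcc I f) := by
    intro hmem
    rw [hJdef, Ideal.map_span, ← Set.range_comp] at hmem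
    rw [Ideal.mem_span_range_iff_exists_fun] at hmem
    obtain ⟨c, hc⟩ := hmem
    choose a b hbI hab using fun i => (c i).2
    have hval : ∑ i, ((c i : AdjoinRoot (X ^ 2 - C f)) *
        algebraMap R (AdjoinRoot (X ^ 2 - C f)) (x i)) =
        algebraMap R (AdjoinRoot (X ^ 2 - C f)) u * AdjoinRoot.root (X ^ 2 - C f) := by
      have := congrArg (Subtype.val) hc
      rw [AddSubmonoidClass.coe_finset_sum] at this
      simpa [utElem, toPcc_val] using this
    have hval' : algebraMap R (AdjoinRoot (X ^ 2 - C f)) (∑ i, a i * x i) +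
        algebraMap R (AdjoinRoot (X ^ 2 - C f)) ((∑ i, b i * x i) - u) *
          AdjoinRoot.root (X ^ 2 - C f) = 0 := by
      rw [map_sub, map_sum, map_sum, sub_mul, Finset.sum_mul]
      have : ∀ i ∈ Finset.univ, (c i : AdjoinRoot (X ^ 2 - C f)) *
          algebraMap R (AdjoinRoot (X ^ 2 - C f)) (x i) =
          algebraMap R (AdjoinRoot (X ^ 2 - C f)) (a i * x i) +
          algebraMap R (AdjoinRoot (X ^ 2 - C f)) (b i * x i) *
            AdjoinRoot.root (X ^ 2 - C f) := by
        intro i _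
        rw [hab i, map_mul, map_mul]
        ring
      rw [Finset.sum_congr rfl this, Finset.sum_add_distrib] at hval
      linear_combination hval
    obtain ⟨-, hb0⟩ := rep_zero f _ _ hval'
    have hueq : u = ∑ i, b i * x i := (sub_eq_zero.mp hb0).symm
    apply h1
    rw [hueq]
    refine Ideal.sum_mem _ fun i _ => ?_
    have hxiJ : x i ∈ J := show x i ∈ Ideal.span (Set.range x) from Ideal.subset_span ⟨i, rfl⟩
    rw [mul_comm (b i) (x i)]
    exact Ideal.mul_mem_mul hxiJ (hbI i)
  -- u ∈ J
  have huJ : u ∈ J := by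
    refine h3 u fun b hb => ?_
    have hbm : b ∈ IsLocalRing.maximalIdeal R := IsLocalRing.le_maximalIdeal hI hb
    rw [mul_comm u b]
    exact h2 b hbm
  -- u² ∈ (x₁², …, x_d²) via char 2 Frobenius
  obtain ⟨c, hc⟩ := Ideal.mem_span_range_iff_exists_fun.mp huJ
  have hu2 : u ^ 2 = ∑ i, c i ^ 2 * x i ^ 2 := by
    have hfr := map_sum (frobenius R 2) (fun i => c i * x i) Finset.univ
    simp only [frobenius_def, mul_pow] at hfr
    rw [← hc]
    exact hfr
  have hu2f : u ^ 2 * f = ∑ i, (c i ^ 2 * f) * x i ^ 2 := by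
    rw [hu2, Finset.sum_mul]
    exact Finset.sum_congr rfl fun i _ => by ring
  -- Part 2
  have hsq : utElem I f u hu ^ 2 ∈
      Ideal.span (Set.range fun i => toPcc I f (x i ^ 2)) := by
    have heq : utElem I f u hu ^ 2 = toPcc I f (u ^ 2 * f) := by
      apply Subtype.ext
      rw [SubmonoidClass.coe_pow]
      show (algebraMap R (AdjoinRoot (X ^ 2 - C f)) u * AdjoinRoot.root (X ^ 2 - C f)) ^ 2 =
        algebraMap R (AdjoinRoot (X ^ 2 - C f)) (u ^ 2 * f)
      rw [mul_pow, root_sq, map_mul, map_pow]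
    rw [heq]
    refine Ideal.mem_span_range_iff_exists_fun.mpr ⟨fun i => toPcc I f (c i ^ 2 * f), ?_⟩
    have hterm : ∀ i ∈ Finset.univ, toPcc I f (c i ^ 2 * f) * toPcc I f (x i ^ 2) =
        toPcc I f ((c i ^ 2 * f) * x i ^ 2) := fun i _ => (map_mul _ _ _).symm
    rw [Finset.sum_congr rfl hterm, ← map_sum, ← hu2f]
  refine ⟨hnot, hsq, ?_⟩
  -- Part 3
  intro hFC
  apply hnot
  refine hFC _ ⟨1, ?_⟩
  rw [pow_one]
  refine Ideal.span_le.mpr ?_ hsq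
  rintro y ⟨i, rfl⟩
  have hxi : toPcc I f (x i) ∈ J.map (toPcc I f) :=
    Ideal.mem_map_of_mem _ (Ideal.subset_span ⟨i, rfl⟩)
  have h' : toPcc I f (x i ^ 2) = (toPcc I f (x i)) ^ 2 := by rw [map_pow]
  show toPcc I f (x i ^ 2) ∈ bracketPow (Ideal.map (toPcc I f) J) 2
  rw [h']
  exact Ideal.subset_span (Set.mem_image_of_mem _ hxi)
end

section
/- Let (B, n) be a commutative local ring of prime characteristic p, J an ideal of B such that B/J has finite length, and w ∈ B such that w ∉ J, n·w ⊆ J, and every s ∈ B with n·s ⊆ J satisfies s ∈ J + B·w. If there exists s ∈ B with s ∉ J and s^{p^e} ∈ J^[p^e] for some e ≥ 0 (i.e., if J is not Frobenius closed), then w^{p^e'} ∈ J^[p^{e'}] for some e' ≥ 0, i.e., w itself lies in the Frobenius closure of J. -/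
/-- If `B/J` has finite length and `w` generates the socle of `B/J`
(in the sense that `w ∉ J`, `n·w ⊆ J`, and every socle element modulo `J` is a multiple
of `w` modulo `J`), then `J` fails to be Frobenius closed only if `w` itself lies in the
Frobenius closure of `J`. -/
theorem statement10 {B : Type*} [CommRing B] [IsLocalRing B]
    (p : ℕ) (hp : p.Prime) [CharP B p]
    (J : Ideal B) (hlen : IsFiniteLength B (B ⧸ J)) (w : B)
    (hw1 : w ∉ J)
    (hw2 : ∀ r ∈ IsLocalRing.maximalIdeal B, r * w ∈ J)
    (hw3 : ∀ s : B, (∀ r ∈ IsLocalRing.maximalIdeal B, r * s ∈ J) →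
      s ∈ J + Ideal.span {w}) :
    (∃ s : B, s ∉ J ∧ ∃ e : ℕ, s ^ p ^ e ∈ bracketPow J (p ^ e)) →
    ∃ e' : ℕ, w ^ p ^ e' ∈ bracketPow J (p ^ e') := by
  rintro ⟨s, hs, e, hse⟩
  haveI := Fact.mk hp
  set m := IsLocalRing.maximalIdeal B with hm
  have hJtop : J ≠ ⊤ := fun h => hs (h ▸ Submodule.mem_top)
  -- B ⧸ J is an Artinian ring
  have hart' : IsArtinian B (B ⧸ J) :=
    (isFiniteLength_iff_isNoetherian_isArtinian.mp hlen).2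
  have hart : IsArtinianRing (B ⧸ J) := isArtinian_of_tower B hart'
  haveI : Nontrivial (B ⧸ J) := Ideal.Quotient.nontrivial_iff.mpr hJtop
  -- maximal ideal image is contained in the Jacobson radical
  have hmap : (m.map (Ideal.Quotient.mk J)) ≤ Ideal.jacobson ⊥ := by
    rw [Ideal.jacobson]
    refine le_sInf ?_
    rintro M ⟨-, hM⟩
    rw [Ideal.map_le_iff_le_comap]
    have : (M.comap (Ideal.Quotient.mk J)).IsMaximal :=
      Ideal.comap_isMaximal_of_surjective _ Ideal.Quotient.mk_surjective
    rw [IsLocalRing.eq_maximalIdeal this]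
  obtain ⟨N, hN⟩ := IsArtinianRing.isNilpotent_jacobson_bot (R := B ⧸ J)
  have hmN : m ^ N ≤ J := by
    intro x hx
    have h1 : (Ideal.Quotient.mk J) x ∈ (m.map (Ideal.Quotient.mk J)) ^ N := by
      rw [← Ideal.map_pow]
      exact Ideal.mem_map_of_mem _ hx
    have h2 : (Ideal.Quotient.mk J) x ∈ (Ideal.jacobson (⊥ : Ideal (B ⧸ J))) ^ N :=
      Ideal.pow_right_mono hmap N h1
    rw [hN] at h2
    simpa [Ideal.Quotient.eq_zero_iff_mem] using h2
  -- find minimal k with m^k * s ⊆ J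
  have hex : ∃ n : ℕ, ∀ r ∈ m ^ n, r * s ∈ J :=
    ⟨N, fun r hr => Ideal.mul_mem_right s J (hmN hr)⟩
  classical
  set k := Nat.find hex with hk
  have hks : ∀ r ∈ m ^ k, r * s ∈ J := Nat.find_spec hex
  have hk0 : k ≠ 0 := by
    intro h
    have := hks 1 (by rw [h, pow_zero, Ideal.one_eq_top]; exact Submodule.mem_top)
    rw [one_mul] at this
    exact hs this
  have hklt : ¬ ∀ r ∈ m ^ (k - 1), r * s ∈ J :=
    Nat.find_min hex (Nat.sub_lt (Nat.pos_of_ne_zero hk0) one_pos)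
  push_neg at hklt
  obtain ⟨r, hr, hrs⟩ := hklt
  set t := r * s with ht
  have ht2 : ∀ q ∈ m, q * t ∈ J := by
    intro q hq
    have hqr : q * r ∈ m ^ k := by
      have hkk : m * m ^ (k - 1) = m ^ k := by
        rw [← pow_succ', Nat.sub_add_cancel (Nat.one_le_iff_ne_zero.mpr hk0)]
      rw [← hkk]
      exact Ideal.mul_mem_mul hq hr
    have := hks (q * r) hqr
    rwa [mul_assoc] at this
  -- t = j + b * w
  have := hw3 t ht2
  rw [Submodule.add_eq_sup, Submodule.mem_sup] at this
  obtain ⟨j, hj, c, hc, hjc⟩ := this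
  rw [Ideal.mem_span_singleton'] at hc
  obtain ⟨b, hb⟩ := hc
  -- b is a unit
  have hbu : IsUnit b := by
    by_contra hbu
    have hbm : b ∈ m := hbu
    have : t ∈ J := by
      rw [← hjc, ← hb]
      exact Ideal.add_mem J hj (hw2 b hbm)
    exact hrs this
  -- finish: w^(p^e) ∈ bracketPow J (p^e)
  refine ⟨e, ?_⟩
  have key : (b * w) ^ p ^ e ∈ bracketPow J (p ^ e) := by
    have hbw : b * w = t - j := by rw [← hjc, hb]; ring
    rw [hbw, sub_pow_char_pow]
    refine Ideal.sub_mem _ ?_ ?_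
    · rw [ht, mul_pow]
      exact Ideal.mul_mem_left _ _ hse
    · exact Ideal.subset_span ⟨j, hj, rfl⟩
  obtain ⟨u, hu⟩ := (hbu.pow (p ^ e)).exists_left_inv
  have : w ^ p ^ e = u * ((b * w) ^ p ^ e) := by
    rw [mul_pow, ← mul_assoc, hu, one_mul]
  rw [this]
  exact Ideal.mul_mem_left _ u key
end

section
/- Let (R, m) be a commutative Noetherian local ring, x₁, …, x_d ∈ m a regular sequence on R, and I an ideal of R with x₁ ∈ I. Let w ∈ R and N ≥ 1. If x₁^N · w lies in the R-submodule (x₁^N, x₂^N, …, x_d^N)·I of R, then w ∈ I + (x₂^N, …, x_d^N)R. -/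
/-!
Permuting the regular sequence (allowed in a Noetherian local ring) puts `x` last, and
raising every term of a weakly regular sequence to the `N`-th power keeps it weakly
regular. Hence `x ^ N` is a nonzerodivisor modulo `J = (x₂ ^ N, …, x_d ^ N)`. Writing
`x ^ N * w = x ^ N * a + v` with `a ∈ I` and `v ∈ J` gives `x ^ N * (w - a) ∈ J`, so
`w - a ∈ J`.
-/

open Ideal RingTheory.Sequence

section

variable {R : Type*} [CommRing R]

def IsRegularMod (K : Ideal R) (a : R) : Prop :=
  ∀ t, a * t ∈ K → t ∈ K

/-- Elementwise form of `IsWeaklyRegular (R ⧸ K)`. -/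
def IsWeaklyRegularMod (K : Ideal R) : List R → Prop
  | [] => True
  | a :: as => IsRegularMod K a ∧ IsWeaklyRegularMod (span {a} ⊔ K) as

namespace IsRegularMod

variable {K : Ideal R} {a b : R}

theorem pow (ha : IsRegularMod K a) (n : ℕ) : IsRegularMod K (a ^ n) := by
  induction n with
  | zero => simp [IsRegularMod]
  | succ n ih =>
    intro t ht
    rw [pow_succ', mul_assoc] at ht
    exact ih _ (ha _ ht)

theorem swap (ha : IsRegularMod K a) (hb : IsRegularMod (span {a} ⊔ K) b) :
    IsRegularMod (span {b} ⊔ K) a := by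
  intro t ht
  obtain ⟨c, k, hk, hck⟩ := mem_span_singleton_sup.mp ht
  have hbc : b * c ∈ span {a} ⊔ K :=
    mem_span_singleton_sup.mpr ⟨t, -k, neg_mem hk, by linear_combination -hck⟩
  obtain ⟨e, k', hk', hek⟩ := mem_span_singleton_sup.mp (hb c hbc)
  have hat : a * (t - e * b) ∈ K := by
    have : a * (t - e * b) = k + k' * b := by linear_combination -hck - b * hek
    exact this ▸ add_mem hk (K.mul_mem_right b hk')
  exact mem_span_singleton_sup.mpr ⟨e, _, ha _ hat, by ring⟩

theorem sup_span_pow (ha : IsRegularMod K a) (hb : IsRegularMod (span {a} ⊔ K) b)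
    (n : ℕ) : IsRegularMod (span {a ^ n} ⊔ K) b := by
  induction n with
  | zero => simp [IsRegularMod]
  | succ n ih =>
    intro t ht
    have hle : span {a ^ (n + 1)} ⊔ K ≤ span {a ^ n} ⊔ K :=
      sup_le_sup_right (span_singleton_le_span_singleton.mpr (pow_dvd_pow a n.le_succ)) K
    -- With `t = c * a ^ n + k`, cancelling `a ^ n` modulo `K` puts `b * c`, hence `c`,
    -- into `(a) + K`.
    obtain ⟨c, k, hk, hck⟩ := mem_span_singleton_sup.mp (ih t (hle ht))
    obtain ⟨e, k', hk', hek⟩ := mem_span_singleton_sup.mp ht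
    have hbc : b * c - e * a ∈ K := by
      refine ha.pow n _ ?_
      have : a ^ n * (b * c - e * a) = k' - b * k := by linear_combination b * hck - hek
      exact this ▸ sub_mem hk' (K.mul_mem_left b hk)
    obtain ⟨f, k'', hk'', hfk⟩ :=
      mem_span_singleton_sup.mp (hb c (mem_span_singleton_sup.mpr ⟨e, _, hbc, by ring⟩))
    refine mem_span_singleton_sup.mpr
      ⟨f, k'' * a ^ n + k, add_mem (K.mul_mem_right _ hk'') hk, ?_⟩
    linear_combination a ^ n * hfk + hck

theorem mem_sup_of_mul_mem {J : Ideal R} {y w : R} (hy : IsRegularMod J y) {I : Ideal R}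
    (h : y * w ∈ (span {y} ⊔ J) * I) : w ∈ I ⊔ J := by
  have hle : (span {y} ⊔ J) * I ≤ span {y} * I ⊔ J := by
    rw [Ideal.sup_mul]
    exact sup_le_sup_left mul_le_left _
  obtain ⟨u, hu, v, hv, huv⟩ := Submodule.mem_sup.mp (hle h)
  obtain ⟨a, haI, rfl⟩ := mem_span_singleton_mul.mp hu
  have hwa : w - a ∈ J := hy _ (by rwa [mul_sub, ← huv, add_sub_cancel_left])
  exact Submodule.mem_sup.mpr ⟨a, haI, w - a, hwa, add_sub_cancel a w⟩

end IsRegularMod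

namespace IsWeaklyRegularMod

variable {K : Ideal R} {a : R} {as : List R}

theorem sup_span_pow (ha : IsRegularMod K a) (has : IsWeaklyRegularMod (span {a} ⊔ K) as)
    (n : ℕ) : IsWeaklyRegularMod (span {a ^ n} ⊔ K) as := by
  induction as generalizing K with
  | nil => trivial
  | cons b bs ih =>
    refine ⟨ha.sup_span_pow has.1 n, ?_⟩
    rw [sup_left_comm]
    exact ih (ha.swap has.1) (sup_left_comm (span {b}) (span {a}) K ▸ has.2)

theorem map_pow (has : IsWeaklyRegularMod K as) (n : ℕ) :
    IsWeaklyRegularMod K (as.map (· ^ n)) := by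
  induction as generalizing K with
  | nil => trivial
  | cons a as ih => exact ⟨has.1.pow n, ih (sup_span_pow has.1 has.2 n)⟩

end IsWeaklyRegularMod

theorem isWeaklyRegularMod_append_singleton_iff {K : Ideal R} {as : List R} {b : R} :
    IsWeaklyRegularMod K (as ++ [b]) ↔
      IsWeaklyRegularMod K as ∧ IsRegularMod (ofList as ⊔ K) b := by
  induction as generalizing K with
  | nil => simp [IsWeaklyRegularMod]
  | cons a as ih =>
    rw [List.cons_append, IsWeaklyRegularMod, IsWeaklyRegularMod, ih, ofList_cons, sup_assoc,
      sup_left_comm, and_assoc]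

theorem isRegularMod_iff_isSMulRegular {K : Ideal R} {a : R} :
    IsRegularMod K a ↔ IsSMulRegular (R ⧸ (K • ⊤ : Submodule R R)) a := by
  rw [isSMulRegular_quotient_iff_mem_of_smul_mem, smul_eq_mul, mul_top]
  rfl

theorem isWeaklyRegularMod_bot_of_isWeaklyRegular {rs : List R}
    (h : IsWeaklyRegular R rs) : IsWeaklyRegularMod ⊥ rs := by
  induction rs using List.reverseRecOn with
  | nil => trivial
  | append_singleton rs b ih =>
    rw [isWeaklyRegular_append_iff, isWeaklyRegular_singleton_iff] at h
    rw [isWeaklyRegularMod_append_singleton_iff, sup_bot_eq, isRegularMod_iff_isSMulRegular]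
    exact ⟨ih h.1, h.2⟩

theorem Ideal.ofList_ofFn {n : ℕ} (f : Fin n → R) :
    ofList (List.ofFn f) = span (Set.range f) := by
  simp only [ofList, List.mem_ofFn']
  rfl

end

theorem statement11_general {R : Type*} [CommRing R] [IsNoetherianRing R] [IsLocalRing R]
    {d : ℕ} (x : R) (x' : Fin d → R)
    (hx : x ∈ IsLocalRing.maximalIdeal R)
    (hx' : ∀ i, x' i ∈ IsLocalRing.maximalIdeal R)
    (hreg : RingTheory.Sequence.IsRegular R (x :: List.ofFn x'))
    (I : Ideal R) (w : R) (N : ℕ)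
    (h : x ^ N * w ∈ Ideal.span ({x ^ N} ∪ Set.range fun i => x' i ^ N) * I) :
    w ∈ I + Ideal.span (Set.range fun i => x' i ^ N) := by
  have hmem : ∀ r ∈ x :: List.ofFn x', r ∈ IsLocalRing.maximalIdeal R := by
    simpa [List.mem_ofFn'] using ⟨hx, hx'⟩
  have hx_last : IsWeaklyRegular R (List.ofFn x' ++ [x]) :=
    IsLocalRing.isWeaklyRegular_of_perm_of_subset_maximalIdeal hreg.toIsWeaklyRegular
      (List.perm_append_singleton x _).symm hmem
  have hpow := (isWeaklyRegularMod_bot_of_isWeaklyRegular hx_last).map_pow N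
  rw [List.map_append, List.map_singleton, isWeaklyRegularMod_append_singleton_iff,
    List.map_ofFn, sup_bot_eq, ofList_ofFn] at hpow
  rw [span_union] at h
  exact hpow.2.mem_sup_of_mul_mem h

/-- For a regular sequence `x₁, …, x_d ∈ m` in a Noetherian local
ring and an ideal `I` containing `x₁`: if `x₁^N·w ∈ (x₁^N, x₂^N, …, x_d^N)·I`, then
`w ∈ I + (x₂^N, …, x_d^N)R`. -/
theorem statement11 {R : Type*} [CommRing R] [IsNoetherianRing R] [IsLocalRing R]
    {d : ℕ} (x : R) (x' : Fin d → R)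
    (hx : x ∈ IsLocalRing.maximalIdeal R)
    (hx' : ∀ i, x' i ∈ IsLocalRing.maximalIdeal R)
    (hreg : RingTheory.Sequence.IsRegular R (x :: List.ofFn x'))
    (I : Ideal R) (hxI : x ∈ I) (w : R) (N : ℕ) (hN : 1 ≤ N)
    (h : x ^ N * w ∈ Ideal.span ({x ^ N} ∪ Set.range fun i => x' i ^ N) * I) :
    w ∈ I + Ideal.span (Set.range fun i => x' i ^ N) :=
  statement11_general x x' hx hx' hreg I w N h
end

section
/- Let (R, m) be a commutative Noetherian local ring of prime characteristic p, I an ideal of R, x ∈ I, and x₂, …, x_d ∈ R such that x, x₂, …, x_d is a regular sequence on R; set J = (x, x₂, …, x_d)R. Let z ∈ R with z ∉ I + (x₂, …, x_d)R, and let u ∈ I with u − x·z ∈ J·I. Assume that for every w ∈ R and every e ≥ 0, w^{p^e} ∈ I + (x₂^{p^e}, …, x_d^{p^e})R implies w ∈ I + (x₂, …, x_d)R. Then for every e ≥ 0, writing q = p^e, one has u^q ∉ (x^q, x₂^q, …, x_d^q)·I. -/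
/-!
Frobenius turns `u - x z ∈ J·I` into `u^q - x^q z^q ∈ J^[q]·I`, so if `u^q ∈ J^[q]·I` then
`x^q z^q = x^q c + y` with `c ∈ I` and `y ∈ (x₂^q, …, x_d^q)`. In a Noetherian local ring,
powers of a regular sequence form a regular sequence in any order, so `x^q` is a
nonzerodivisor modulo `(x₂^q, …, x_d^q)`. Hence `z^q ∈ I + (x₂^q, …, x_d^q)`, and the
hypothesis on `R/I` gives `z ∈ I + (x₂, …, x_d)`.
-/

section

open Ideal

variable {R : Type*} [CommRing R]

namespace Ideal

theorem isSMulRegular_quotient_iff {K : Ideal R} {r : R} :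
    IsSMulRegular (R ⧸ K) r ↔ ∀ w, r * w ∈ K → w ∈ K :=
  isSMulRegular_quotient_iff_mem_of_smul_mem K r

theorem isSMulRegular_quotient_span_mul_sup {T : Ideal R} {a b c : R}
    (ha : IsSMulRegular (R ⧸ T) a) (hca : IsSMulRegular (R ⧸ (span {a} ⊔ T)) c)
    (hcb : IsSMulRegular (R ⧸ (span {b} ⊔ T)) c) :
    IsSMulRegular (R ⧸ (span {a * b} ⊔ T)) c := by
  simp only [isSMulRegular_quotient_iff, mem_span_singleton_sup] at *
  rintro w ⟨k, t₀, ht₀, hw⟩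
  obtain ⟨w', t₁, ht₁, rfl⟩ := hca w ⟨k * b, t₀, ht₀, by rw [← hw]; ring⟩
  have hw' : c * w' - b * k ∈ T := ha _ <| by
    convert sub_mem ht₀ (T.mul_mem_left c ht₁) using 1
    linear_combination -hw
  obtain ⟨k', t₂, ht₂, rfl⟩ := hcb w' ⟨k, _, hw', by ring⟩
  exact ⟨k', t₂ * a + t₁, add_mem (T.mul_mem_right a ht₂) ht₁, by ring⟩

theorem ofList_ofFn_s12 {n : ℕ} (f : Fin n → R) : ofList (List.ofFn f) = span (Set.range f) :=
  congrArg span (Set.ext fun r => List.mem_ofFn' f r)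

theorem pow_mem_span_image_pow_mul (p : ℕ) [ExpChar R p] (e : ℕ) {S : Set R} {I : Ideal R}
    {w : R} (hw : w ∈ span S * I) : w ^ p ^ e ∈ span ((· ^ p ^ e) '' S) * I := by
  have hmap := mem_map_of_mem (iterateFrobenius R p e) hw
  rw [Ideal.map_mul, map_span] at hmap
  refine mul_mono_right (map_le_iff_le_comap.2 fun i hi => ?_) hmap
  exact I.pow_mem_of_mem hi _ (expChar_pow_pos R p e)

theorem mem_sup_of_mul_mem_span_union_mul {a w : R} {S : Set R} {I : Ideal R}
    (ha : IsSMulRegular (R ⧸ span S) a) (h : a * w ∈ span ({a} ∪ S) * I) :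
    w ∈ I ⊔ span S := by
  rw [span_union, Submodule.sup_mul, Submodule.mem_sup] at h
  obtain ⟨_, hc, y, hy, hw⟩ := h
  obtain ⟨c, hcI, rfl⟩ := mem_span_singleton_mul.1 hc
  have hwc : w - c ∈ span S := isSMulRegular_quotient_iff.1 ha _ <| by
    rw [mul_sub, ← hw, add_sub_cancel_left]
    exact mul_le_left hy
  exact Submodule.mem_sup.2 ⟨c, hcI, w - c, hwc, add_sub_cancel c w⟩

end Ideal

namespace RingTheory.Sequence

theorem isWeaklyRegular_self_iff (l : List R) :
    IsWeaklyRegular R l ↔ ∀ i (h : i < l.length), IsSMulRegular (R ⧸ ofList (l.take i)) l[i] := by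
  rw [isWeaklyRegular_iff]
  refine forall₂_congr fun i _ => ?_
  rw [smul_eq_mul, Ideal.mul_top]

theorem isRegular_self_iff (l : List R) :
    IsRegular R l ↔ IsWeaklyRegular R l ∧ ofList l ≠ ⊤ := by
  rw [isRegular_iff, smul_eq_mul, Ideal.mul_top, ne_comm]

theorem IsWeaklyRegular.isSMulRegular_of_append_singleton {l : List R} {a : R}
    (h : IsWeaklyRegular R (l ++ [a])) : IsSMulRegular (R ⧸ ofList l) a := by
  have := ((isWeaklyRegular_append_iff R l [a]).1 h).2
  rwa [isWeaklyRegular_singleton_iff, smul_eq_mul, Ideal.mul_top] at this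

theorem IsWeaklyRegular.cons_mul {a b : R} {t : List R}
    (ha : IsWeaklyRegular R (a :: t)) (hb : IsWeaklyRegular R (b :: t))
    (hT : ∀ i < t.length, IsSMulRegular (R ⧸ ofList (t.take i)) a) :
    IsWeaklyRegular R (a * b :: t) := by
  rw [isWeaklyRegular_self_iff] at *
  rintro (_ | i) hi
  · exact (ha 0 (by simp)).mul (hb 0 (by simp))
  · have hi : i < t.length := Nat.succ_lt_succ_iff.1 hi
    have ha' := ha (i + 1) (Nat.succ_lt_succ hi)
    have hb' := hb (i + 1) (Nat.succ_lt_succ hi)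
    rw [isSMulRegular_quotient_iff] at ha' hb' ⊢
    simp only [List.take_succ_cons, List.getElem_cons_succ, ofList_cons] at ha' hb' ⊢
    exact isSMulRegular_quotient_iff.1 <| isSMulRegular_quotient_span_mul_sup (hT i hi)
      (isSMulRegular_quotient_iff.2 ha') (isSMulRegular_quotient_iff.2 hb')

theorem IsWeaklyRegular.cons_pow {a : R} {t : List R}
    (ha : IsWeaklyRegular R (a :: t))
    (hT : ∀ i < t.length, IsSMulRegular (R ⧸ ofList (t.take i)) a) {n : ℕ} (hn : n ≠ 0) :
    IsWeaklyRegular R (a ^ n :: t) := by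
  obtain ⟨n, rfl⟩ := Nat.exists_eq_succ_of_ne_zero hn
  induction n with
  | zero => simpa using ha
  | succ n ih => simpa [pow_succ'] using ha.cons_mul (ih n.succ_ne_zero) hT

section Local

variable [IsLocalRing R]

theorem IsRegular.mem_maximalIdeal {l : List R} (h : IsRegular R l) :
    ∀ r ∈ l, r ∈ IsLocalRing.maximalIdeal R := fun _ hr =>
  IsLocalRing.le_maximalIdeal ((isRegular_self_iff l).1 h).2 (subset_span hr)

variable [IsNoetherianRing R]

-- In a Noetherian local ring the prefix `a :: t.take i` may be reordered to end with `a`.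
theorem IsRegular.isSMulRegular_quotient_ofList_take {a : R} {t : List R}
    (h : IsRegular R (a :: t)) (i : ℕ) : IsSMulRegular (R ⧸ ofList (t.take i)) a := by
  have hprefix : IsWeaklyRegular R (a :: t.take i) := by
    rw [← List.take_append_drop i t, ← List.cons_append] at h
    exact ((isWeaklyRegular_append_iff R _ _).1 h.toIsWeaklyRegular).1
  refine (IsLocalRing.isWeaklyRegular_of_perm_of_subset_maximalIdeal hprefix
    (List.perm_append_singleton a _).symm fun r hr => h.mem_maximalIdeal r ?_)
    |>.isSMulRegular_of_append_singleton
  exact List.cons_subset_cons a (List.take_subset i t) hr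

theorem IsRegular.cons_pow {a : R} {t : List R} (h : IsRegular R (a :: t)) {n : ℕ}
    (hn : n ≠ 0) : IsRegular R (a ^ n :: t) := by
  refine (isRegular_self_iff _).2
    ⟨h.toIsWeaklyRegular.cons_pow (fun i _ => h.isSMulRegular_quotient_ofList_take i) hn,
      ne_top_of_le_ne_top ((isRegular_self_iff _).1 h).2 ?_⟩
  rw [ofList_cons, ofList_cons]
  exact sup_le_sup_right (span_singleton_le_span_singleton.2 (dvd_pow_self a hn)) _

theorem IsRegular.map_pow_append {s t : List R} (h : IsRegular R (s ++ t)) {n : ℕ}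
    (hn : n ≠ 0) : IsRegular R (s.map (· ^ n) ++ t) := by
  induction s generalizing t with
  | nil => exact h
  | cons a s ih =>
    have h' : IsRegular R (s ++ (t ++ [a ^ n])) := by
      refine IsLocalRing.isRegular_of_perm (h.cons_pow hn) ?_
      rw [← List.append_assoc]
      exact (List.perm_append_singleton _ _).symm
    refine IsLocalRing.isRegular_of_perm (ih h') ?_
    rw [← List.append_assoc]
    exact List.perm_append_singleton _ _

theorem IsRegular.isSMulRegular_pow_quotient_ofList_map_pow {a : R} {l : List R}
    (h : IsRegular R (a :: l)) {n : ℕ} (hn : n ≠ 0) :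
    IsSMulRegular (R ⧸ ofList (l.map (· ^ n))) (a ^ n) := by
  have hpow : IsRegular R (a ^ n :: l.map (· ^ n)) := by
    simpa using IsRegular.map_pow_append (s := a :: l) (t := []) (by simpa using h) hn
  exact (IsLocalRing.isRegular_of_perm hpow (List.perm_append_singleton _ _).symm)
    |>.toIsWeaklyRegular.isSMulRegular_of_append_singleton

end Local

end RingTheory.Sequence

end

theorem statement12_general {R : Type*} [CommRing R] [IsNoetherianRing R] [IsLocalRing R]
    (p : ℕ) (hp : p.Prime) [CharP R p]
    (I : Ideal R) (x : R) {d : ℕ} (x' : Fin d → R)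
    (hreg : RingTheory.Sequence.IsRegular R (x :: List.ofFn x'))
    (z : R) (hz : z ∉ I + Ideal.span (Set.range x'))
    (u : R)
    (huz : u - x * z ∈ Ideal.span ({x} ∪ Set.range x') * I)
    (hFinj : ∀ (w : R) (e : ℕ),
      w ^ p ^ e ∈ I + Ideal.span (Set.range fun i => x' i ^ p ^ e) →
      w ∈ I + Ideal.span (Set.range x')) :
    ∀ e : ℕ,
      u ^ p ^ e ∉ Ideal.span ({x ^ p ^ e} ∪ Set.range fun i => x' i ^ p ^ e) * I := by
  have := Fact.mk hp
  intro e hmem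
  have himage : (· ^ p ^ e) '' ({x} ∪ Set.range x') =
      {x ^ p ^ e} ∪ Set.range fun i => x' i ^ p ^ e := by
    rw [Set.image_union, Set.image_singleton, ← Set.range_comp]
    rfl
  have hxz : x ^ p ^ e * z ^ p ^ e ∈
      Ideal.span ({x ^ p ^ e} ∪ Set.range fun i => x' i ^ p ^ e) * I := by
    have h := Ideal.pow_mem_span_image_pow_mul p e huz
    rw [himage, sub_pow_char_pow, mul_pow] at h
    simpa using sub_mem hmem h
  have hregular : IsSMulRegular (R ⧸ Ideal.span (Set.range fun i => x' i ^ p ^ e)) (x ^ p ^ e) := by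
    have := hreg.isSMulRegular_pow_quotient_ofList_map_pow (pow_ne_zero e hp.ne_zero)
    rwa [List.map_ofFn, Ideal.ofList_ofFn_s12] at this
  exact hz (hFinj z e (Ideal.mem_sup_of_mul_mem_span_union_mul hregular hxz))

/-- With `J = (x, x₂, …, x_d)R`, `z ∉ I + (x₂, …, x_d)R`,
`u ∈ I` with `u − x·z ∈ J·I`, and assuming the Frobenius-injectivity-type condition
(iv) on `R/I`, one has `u^q ∉ (x^q, x₂^q, …, x_d^q)·I` for every `q = p^e`. -/
theorem statement12 {R : Type*} [CommRing R] [IsNoetherianRing R] [IsLocalRing R]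
    (p : ℕ) (hp : p.Prime) [CharP R p]
    (I : Ideal R) (x : R) (hxI : x ∈ I) {d : ℕ} (x' : Fin d → R)
    (hreg : RingTheory.Sequence.IsRegular R (x :: List.ofFn x'))
    (z : R) (hz : z ∉ I + Ideal.span (Set.range x'))
    (u : R) (hu : u ∈ I)
    (huz : u - x * z ∈ Ideal.span ({x} ∪ Set.range x') * I)
    (hFinj : ∀ (w : R) (e : ℕ),
      w ^ p ^ e ∈ I + Ideal.span (Set.range fun i => x' i ^ p ^ e) →
      w ∈ I + Ideal.span (Set.range x')) :
    ∀ e : ℕ,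
      u ^ p ^ e ∉ Ideal.span ({x ^ p ^ e} ∪ Set.range fun i => x' i ^ p ^ e) * I :=
  statement12_general p hp I x x' hreg z hz u huz hFinj
end
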